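/- Let f : ℤ₂ → ℤ₂ be a 1-Lipschitz transitive map. Then for every x ∈ ℤ₂ and every n ∈ ℕ one has f^[2^n](x) ≡ x + 2^n (mod 2^(n+1)), i.e. ‖f^[2^n](x) − x − 2^n‖ ≤ 2^(−(n+1)). -/

import Mathlib

open Function Finset

/-- `a ≡ b (mod 2^s)` in the 2-adic integers. -/
def CongMod (s : ℕ) (a b : ℤ_[2]) : Prop := ‖a - b‖ ≤ ((2 : ℝ) ^ s)⁻¹

/-- `f` is 1-Lipschitz for the 2-adic norm (a T-function). -/
def OneLip (f : ℤ_[2] → ℤ_[2]) : Prop := ∀ a b : ℤ_[2], ‖f a - f b‖ ≤ ‖a - b‖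

/-- `f` is transitive modulo `2^n`. -/
def TransMod (f : ℤ_[2] → ℤ_[2]) (n : ℕ) : Prop :=
  ∀ x y : ℤ_[2], ∃ i < 2 ^ n, CongMod n (f^[i] x) y

/-- `f` is transitive (single cycle modulo every power of 2). -/
def TransitiveT (f : ℤ_[2] → ℤ_[2]) : Prop := ∀ n : ℕ, 1 ≤ n → TransMod f n

/-- `f` is bijective modulo `2^n`. -/
def BijMod (f : ℤ_[2] → ℤ_[2]) (n : ℕ) : Prop :=
  (∀ a b : ℤ_[2], CongMod n (f a) (f b) → CongMod n a b) ∧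
  (∀ y : ℤ_[2], ∃ x : ℤ_[2], CongMod n (f x) y)

/-- `f` is bijective (measure-preserving T-function). -/
def BijectiveT (f : ℤ_[2] → ℤ_[2]) : Prop := ∀ n : ℕ, 1 ≤ n → BijMod f n

/-- `g` is a derivative of `f` modulo `2^M` with parameter `K`. -/
def IsDerivMod (f g : ℤ_[2] → ℤ_[2]) (M K : ℕ) : Prop :=
  ∀ x h : ℤ_[2], ‖h‖ ≤ ((2 : ℝ) ^ K)⁻¹ →
    ‖f (x + h) - f x - g x * h‖ ≤ ((2 : ℝ) ^ M)⁻¹ * ‖h‖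

/-- The `n`-th binary digit of a 2-adic integer, as an element of `ZMod 2`.
`PadicInt.appr x n` is the unique integer in `{0, …, 2^n - 1}` congruent to `x` mod `2^n`. -/
noncomputable def delta (n : ℕ) (x : ℤ_[2]) : ZMod 2 :=
  (((x.appr (n + 1) - x.appr n) / 2 ^ n : ℕ) : ZMod 2)

/-!
Transitivity modulo `2^m` says that `i ↦ f^[i] x mod 2^m` maps `{0, …, 2^m - 1}` onto
`ℤ/2^m`, hence bijectively. So the orbit of `x` returns to `x` modulo `2^n` after exactly
`2^n` steps, while modulo `2^(n+1)` it does not return after `2^n` steps.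
Thus `f^[2^n] x - x` is divisible by `2^n` but not by `2^(n+1)`, i.e. it is `2^n` times
an odd 2-adic integer.
-/

open PadicInt

lemma congMod_zero (a b : ℤ_[2]) : CongMod 0 a b := by
  simpa [CongMod] using norm_le_one (a - b)

lemma congMod_iff_toZModPow (s : ℕ) (a b : ℤ_[2]) :
    CongMod s a b ↔ toZModPow s a = toZModPow s b := by
  have h : ((2 : ℝ) ^ s)⁻¹ = ((2 : ℕ) : ℝ) ^ (-(s : ℤ)) := by
    rw [zpow_neg, zpow_natCast]; norm_num
  rw [CongMod, h, norm_le_pow_iff_mem_span_pow, ← ker_toZModPow, RingHom.mem_ker, map_sub,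
    sub_eq_zero]

lemma congMod_add_left_iff (s : ℕ) (a b c : ℤ_[2]) :
    CongMod s (a + b) (a + c) ↔ CongMod s b c := by
  rw [CongMod, CongMod, add_sub_add_left_eq_sub]

lemma congMod_two_pow_mul_iff (n s : ℕ) (a b : ℤ_[2]) :
    CongMod (n + s) (2 ^ n * a) (2 ^ n * b) ↔ CongMod s a b := by
  have h2 : ‖(2 : ℤ_[2])‖ = 2⁻¹ := by simpa using norm_p (p := 2)
  rw [CongMod, CongMod, ← mul_sub, norm_mul, norm_pow, h2, pow_add, _root_.mul_inv, inv_pow,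
    mul_le_mul_iff_right₀ (by positivity)]

lemma CongMod.two_pow_dvd_sub {n : ℕ} {a b : ℤ_[2]} (h : CongMod n a b) :
    (2 : ℤ_[2]) ^ n ∣ a - b := by
  rw [congMod_iff_toZModPow, ← sub_eq_zero, ← map_sub, ← RingHom.mem_ker, ker_toZModPow,
    Ideal.mem_span_singleton] at h
  exact_mod_cast h

lemma congMod_one_zero_or_one (c : ℤ_[2]) : CongMod 1 c 0 ∨ CongMod 1 c 1 := by
  simp only [congMod_iff_toZModPow, map_zero, map_one]
  generalize toZModPow 1 c = r
  revert r
  decide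

lemma CongMod.congMod_add_two_pow {n : ℕ} {a b : ℤ_[2]} (hn : CongMod n a b)
    (hn1 : ¬ CongMod (n + 1) a b) : CongMod (n + 1) a (b + 2 ^ n) := by
  obtain ⟨c, hc⟩ := hn.two_pow_dvd_sub
  rw [sub_eq_iff_eq_add'] at hc
  have hmul : ∀ d, CongMod (n + 1) a (b + 2 ^ n * d) ↔ CongMod 1 c d := fun d => by
    rw [hc, congMod_add_left_iff, congMod_two_pow_mul_iff]
  have hc0 : ¬ CongMod 1 c 0 := (hmul 0).not.mp (by rwa [mul_zero, add_zero])
  simpa using (hmul 1).mpr ((congMod_one_zero_or_one c).resolve_left hc0)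

namespace TransMod

variable {f : ℤ_[2] → ℤ_[2]} {m : ℕ}

lemma eq_of_congMod_iterate (ht : TransMod f m) (x : ℤ_[2]) {i j : ℕ} (hi : i < 2 ^ m)
    (hj : j < 2 ^ m) (h : CongMod m (f^[i] x) (f^[j] x)) : i = j := by
  let orbit : Fin (2 ^ m) → ZMod (2 ^ m) := fun k => toZModPow m (f^[k] x)
  have hsurj : Surjective orbit := fun y => by
    obtain ⟨z, rfl⟩ := ZMod.ringHom_surjective (toZModPow (p := 2) m) y
    obtain ⟨k, hk, hkz⟩ := ht x z
    exact ⟨⟨k, hk⟩, (congMod_iff_toZModPow m _ _).mp hkz⟩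
  have hinj : Injective orbit :=
    ((Fintype.bijective_iff_surjective_and_card orbit).mpr ⟨hsurj, by simp⟩).injective
  exact Fin.mk.inj_iff.mp (hinj (a₁ := ⟨i, hi⟩) (a₂ := ⟨j, hj⟩)
    ((congMod_iff_toZModPow m _ _).mp h))

lemma congMod_iterate_two_pow (ht : TransMod f m) (x : ℤ_[2]) :
    CongMod m (f^[2 ^ m] x) x := by
  obtain ⟨i, hi, hix⟩ := ht (f x) x
  rw [← iterate_succ_apply] at hix
  obtain hlt | heq := (Nat.succ_le_of_lt hi).lt_or_eq
  · exact absurd (ht.eq_of_congMod_iterate x (j := 0) hlt (by positivity) hix) i.succ_ne_zero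
  · rwa [← heq]

end TransMod

lemma TransitiveT.transMod {f : ℤ_[2] → ℤ_[2]} (hft : TransitiveT f) (n : ℕ) : TransMod f n := by
  rcases n.eq_zero_or_pos with rfl | hn
  · exact fun x y => ⟨0, by simp, congMod_zero _ _⟩
  · exact hft n hn

theorem iterate_pow_two_congr_general (f : ℤ_[2] → ℤ_[2])
    (hft : TransitiveT f) (x : ℤ_[2]) (n : ℕ) :
    ‖f^[2 ^ n] x - x - 2 ^ n‖ ≤ ((2 : ℝ) ^ (n + 1))⁻¹ := by
  have hn : CongMod n (f^[2 ^ n] x) x := (hft.transMod n).congMod_iterate_two_pow x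
  have hn1 : ¬ CongMod (n + 1) (f^[2 ^ n] x) (f^[0] x) := fun h =>
    (pow_pos two_pos n).ne' <| (hft.transMod (n + 1)).eq_of_congMod_iterate x
      (Nat.pow_lt_pow_succ one_lt_two) (by positivity) h
  rw [sub_sub]
  exact hn.congMod_add_two_pow hn1

/-- For a transitive T-function, `f^[2^n](x) ≡ x + 2^n (mod 2^(n+1))`. -/
theorem iterate_pow_two_congr (f : ℤ_[2] → ℤ_[2])
    (hf : OneLip f) (hft : TransitiveT f) (x : ℤ_[2]) (n : ℕ) :
    ‖f^[2 ^ n] x - x - 2 ^ n‖ ≤ ((2 : ℝ) ^ (n + 1))⁻¹ :=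
  iterate_pow_two_congr_general f hft x n
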